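/- arXiv:1304.1035 — 3 statements merged into one kernel-verified Lean document; each statement's English description precedes it below -/
import Mathlib

section
/- Let X0 = x2 ∂/∂x1 - x1 ∂/∂x2 + x5 ∂/∂x4 - x4 ∂/∂x5 + P ∂/∂x6 + Q ∂/∂x7 + R ∂/∂x8 on ℝ^8, where P = -x1⁴/24 + x1²x2²/8 + x7, Q = x1x2³/12 + x1³x2/12 - 2x6 + 2x8, R = x1²x2²/8 - x2⁴/24 - x7. Then [X0, X1] = X2 and [X0, X2] = -X1, where X1, X2 are the symmetric model fields. -/
open scoped BigOperators

noncomputable section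

/-- A vector field on `ℝ⁸`, identified with a map `ℝ⁸ → ℝ⁸`. -/
abbrev VF := (Fin 8 → ℝ) → (Fin 8 → ℝ)

/-- Lie bracket of vector fields, componentwise
`([X,Y])_i = Σ_j (X_j ∂Y_i/∂x_j - Y_j ∂X_i/∂x_j)`. -/
def lieBracket (X Y : VF) : VF := fun p i =>
  ∑ j, (X p j * fderiv ℝ (fun q => Y q i) p (Pi.single j 1)
      - Y p j * fderiv ℝ (fun q => X q i) p (Pi.single j 1))
def X0 : VF := fun p =>
  ![p 1, -p 0, 0, p 4, -p 3,
    -(p 0)^4/24 + (p 0)^2 * (p 1)^2 / 8 + p 6,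
    p 0 * (p 1)^3 / 12 + (p 0)^3 * p 1 / 12 - 2 * p 5 + 2 * p 7,
    (p 0)^2 * (p 1)^2 / 8 - (p 1)^4/24 - p 6]
def X1 : VF := fun p =>
  ![1, 0, -(p 1)/2, 0, -((p 0)^2 + (p 1)^2)/2, 0, -(p 0 * (p 1)^2)/4, -(p 1)^3/6]
def X2 : VF := fun p =>
  ![0, 1, p 0 / 2, ((p 0)^2 + (p 1)^2)/2, 0, (p 0)^3/6, (p 0)^2 * p 1 / 4, 0]

lemma vec5 (a b c d e f g h : ℝ) : ![a,b,c,d,e,f,g,h] (5:Fin 8) = f := rfl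
lemma vec6 (a b c d e f g h : ℝ) : ![a,b,c,d,e,f,g,h] (6:Fin 8) = g := rfl
lemma vec7 (a b c d e f g h : ℝ) : ![a,b,c,d,e,f,g,h] (7:Fin 8) = h := rfl
lemma fm5 : (⟨5, by norm_num⟩:Fin 8) = 5 := rfl
lemma fm6 : (⟨6, by norm_num⟩:Fin 8) = 6 := rfl
lemma fm7 : (⟨7, by norm_num⟩:Fin 8) = 7 := rfl

set_option maxHeartbeats 4000000 in
theorem stmt9 : lieBracket X0 X1 = X2 ∧ lieBracket X0 X2 = -X1 := by
  constructor <;>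
  · funext p i
    have h : ∀ (k : Fin 8), fderiv ℝ (fun q : Fin 8 → ℝ => q k) p = ContinuousLinearMap.proj k :=
      fun k => (ContinuousLinearMap.proj k : (Fin 8 → ℝ) →L[ℝ] ℝ).fderiv
    fin_cases i <;>
    · simp only [lieBracket, X0, X1, X2, Pi.neg_apply, Fin.sum_univ_eight, fm5, fm6, fm7,
        Matrix.cons_val_zero, Matrix.cons_val_one, Matrix.head_cons, Matrix.cons_val_two,
        Matrix.tail_cons, Matrix.cons_val_three, Matrix.cons_val_four, vec5, vec6, vec7]
      simp only [pow_succ, pow_zero, one_mul, div_eq_mul_inv]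
      simp (disch := fun_prop) [fderiv_mul, fderiv_mul_const, fderiv_add, fderiv_sub, fderiv_neg,
        fderiv_fun_mul, fderiv_fun_add, fderiv_fun_sub, fderiv_fun_neg, fderiv_pow,
        h, Pi.single_apply]
      try ring
end
end

section
/- With X0 as above, [X0, X3] = 0, where X3 = ∂/∂x3 + x1 ∂/∂x4 + x2 ∂/∂x5 + (x1²/2) ∂/∂x6 + x1x2 ∂/∂x7 + (x2²/2) ∂/∂x8. -/
open scoped BigOperators

noncomputable section

def X3 : VF := fun p =>
  ![0, 0, 1, p 0, p 1, (p 0)^2/2, p 0 * p 1, (p 1)^2/2]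

section helpers
variable {f g : (Fin 8 → ℝ) → ℝ} {p v : Fin 8 → ℝ} {c : ℝ} {n : ℕ} {k : Fin 8}

variable {f g : (Fin 8 → ℝ) → ℝ} {p v : Fin 8 → ℝ} {c : ℝ} {n : ℕ} {k : Fin 8}

lemma D_coord (k : Fin 8) (p v : Fin 8 → ℝ) :
    fderiv ℝ (fun q : Fin 8 → ℝ => q k) p v = v k := by
  have : (fun q : Fin 8 → ℝ => q k) = (ContinuousLinearMap.proj k : (Fin 8 → ℝ) →L[ℝ] ℝ) := rfl
  rw [this, ContinuousLinearMap.fderiv]; rfl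

lemma D_const (c : ℝ) : fderiv ℝ (fun _ : Fin 8 → ℝ => c) p v = 0 := by
  simp

lemma D_add (hf : DifferentiableAt ℝ f p) (hg : DifferentiableAt ℝ g p) :
    fderiv ℝ (fun q => f q + g q) p v = fderiv ℝ f p v + fderiv ℝ g p v := by
  rw [fderiv_fun_add hf hg]; rfl

lemma D_sub (hf : DifferentiableAt ℝ f p) (hg : DifferentiableAt ℝ g p) :
    fderiv ℝ (fun q => f q - g q) p v = fderiv ℝ f p v - fderiv ℝ g p v := by
  rw [fderiv_fun_sub hf hg]; rfl

lemma D_neg : fderiv ℝ (fun q => -f q) p v = -fderiv ℝ f p v := by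
  rw [fderiv_fun_neg]; rfl

lemma D_mul (hf : DifferentiableAt ℝ f p) (hg : DifferentiableAt ℝ g p) :
    fderiv ℝ (fun q => f q * g q) p v = f p * fderiv ℝ g p v + g p * fderiv ℝ f p v := by
  rw [fderiv_fun_mul hf hg]; rfl

lemma D_const_mul (hf : DifferentiableAt ℝ f p) (c : ℝ) :
    fderiv ℝ (fun q => c * f q) p v = c * fderiv ℝ f p v := by
  rw [fderiv_const_mul hf]; rfl

lemma D_div_const (hf : DifferentiableAt ℝ f p) (c : ℝ) :
    fderiv ℝ (fun q => f q / c) p v = fderiv ℝ f p v / c := by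
  simp only [div_eq_mul_inv]
  rw [fderiv_mul_const hf]
  simp [div_eq_mul_inv, mul_comm]

lemma D_pow (hf : DifferentiableAt ℝ f p) (n : ℕ) :
    fderiv ℝ (fun q => f q ^ n) p v = n * f p ^ (n - 1) * fderiv ℝ f p v := by
  induction n with
  | zero => simp
  | succ m ih =>
    simp only [pow_succ]
    rw [D_mul (f := fun q => f q ^ m) (hf.pow m) hf]
    rcases Nat.eq_zero_or_pos m with h | h
    · subst h; simp
    · rw [ih]
      have : m - 1 + 1 = m := Nat.succ_pred_eq_of_pos h
      push_cast [Nat.add_sub_cancel]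
      rw [← this]
      push_cast
      ring

end helpers


lemma X0f_0 : (fun q : Fin 8 → ℝ => X0 q 0) = fun q => (q 1 : ℝ) := rfl
lemma X0a_0 (q : Fin 8 → ℝ) : X0 q 0 = (q 1 : ℝ) := rfl
lemma X0f_1 : (fun q : Fin 8 → ℝ => X0 q 1) = fun q => (-q 0 : ℝ) := rfl
lemma X0a_1 (q : Fin 8 → ℝ) : X0 q 1 = (-q 0 : ℝ) := rfl
lemma X0f_2 : (fun q : Fin 8 → ℝ => X0 q 2) = fun q => (0 : ℝ) := rfl
lemma X0a_2 (q : Fin 8 → ℝ) : X0 q 2 = (0 : ℝ) := rfl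
lemma X0f_3 : (fun q : Fin 8 → ℝ => X0 q 3) = fun q => (q 4 : ℝ) := rfl
lemma X0a_3 (q : Fin 8 → ℝ) : X0 q 3 = (q 4 : ℝ) := rfl
lemma X0f_4 : (fun q : Fin 8 → ℝ => X0 q 4) = fun q => (-q 3 : ℝ) := rfl
lemma X0a_4 (q : Fin 8 → ℝ) : X0 q 4 = (-q 3 : ℝ) := rfl
lemma X0f_5 : (fun q : Fin 8 → ℝ => X0 q 5) = fun q => (-q 0^4/24 + q 0^2 * q 1^2 / 8 + q 6 : ℝ) := rfl
lemma X0a_5 (q : Fin 8 → ℝ) : X0 q 5 = (-q 0^4/24 + q 0^2 * q 1^2 / 8 + q 6 : ℝ) := rfl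
lemma X0f_6 : (fun q : Fin 8 → ℝ => X0 q 6) = fun q => (q 0 * q 1^3 / 12 + q 0^3 * q 1 / 12 - 2 * q 5 + 2 * q 7 : ℝ) := rfl
lemma X0a_6 (q : Fin 8 → ℝ) : X0 q 6 = (q 0 * q 1^3 / 12 + q 0^3 * q 1 / 12 - 2 * q 5 + 2 * q 7 : ℝ) := rfl
lemma X0f_7 : (fun q : Fin 8 → ℝ => X0 q 7) = fun q => (q 0^2 * q 1^2 / 8 - q 1^4/24 - q 6 : ℝ) := rfl
lemma X0a_7 (q : Fin 8 → ℝ) : X0 q 7 = (q 0^2 * q 1^2 / 8 - q 1^4/24 - q 6 : ℝ) := rfl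
lemma X3f_0 : (fun q : Fin 8 → ℝ => X3 q 0) = fun q => (0 : ℝ) := rfl
lemma X3a_0 (q : Fin 8 → ℝ) : X3 q 0 = (0 : ℝ) := rfl
lemma X3f_1 : (fun q : Fin 8 → ℝ => X3 q 1) = fun q => (0 : ℝ) := rfl
lemma X3a_1 (q : Fin 8 → ℝ) : X3 q 1 = (0 : ℝ) := rfl
lemma X3f_2 : (fun q : Fin 8 → ℝ => X3 q 2) = fun q => (1 : ℝ) := rfl
lemma X3a_2 (q : Fin 8 → ℝ) : X3 q 2 = (1 : ℝ) := rfl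
lemma X3f_3 : (fun q : Fin 8 → ℝ => X3 q 3) = fun q => (q 0 : ℝ) := rfl
lemma X3a_3 (q : Fin 8 → ℝ) : X3 q 3 = (q 0 : ℝ) := rfl
lemma X3f_4 : (fun q : Fin 8 → ℝ => X3 q 4) = fun q => (q 1 : ℝ) := rfl
lemma X3a_4 (q : Fin 8 → ℝ) : X3 q 4 = (q 1 : ℝ) := rfl
lemma X3f_5 : (fun q : Fin 8 → ℝ => X3 q 5) = fun q => (q 0^2/2 : ℝ) := rfl
lemma X3a_5 (q : Fin 8 → ℝ) : X3 q 5 = (q 0^2/2 : ℝ) := rfl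
lemma X3f_6 : (fun q : Fin 8 → ℝ => X3 q 6) = fun q => (q 0 * q 1 : ℝ) := rfl
lemma X3a_6 (q : Fin 8 → ℝ) : X3 q 6 = (q 0 * q 1 : ℝ) := rfl
lemma X3f_7 : (fun q : Fin 8 → ℝ => X3 q 7) = fun q => (q 1^2/2 : ℝ) := rfl
lemma X3a_7 (q : Fin 8 → ℝ) : X3 q 7 = (q 1^2/2 : ℝ) := rfl


set_option maxHeartbeats 4000000 in
theorem stmt10 : lieBracket X0 X3 = 0 := by
  funext p i
  fin_cases i <;>
  · simp only [lieBracket, Fin.sum_univ_eight, Fin.isValue, Fin.mk_zero, Fin.mk_one, Fin.reduceFinMk,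
      X0f_0, X0a_0, X0f_1, X0a_1, X0f_2, X0a_2, X0f_3, X0a_3, X0f_4, X0a_4, X0f_5, X0a_5, X0f_6, X0a_6, X0f_7, X0a_7, X3f_0, X3a_0, X3f_1, X3a_1, X3f_2, X3a_2, X3f_3, X3a_3, X3f_4, X3a_4, X3f_5, X3a_5, X3f_6, X3a_6, X3f_7, X3a_7]
    simp (disch := fun_prop) only [D_add, D_sub, D_neg, D_mul, D_const_mul,
      D_div_const, D_pow, D_coord, D_const]
    try simp only [Pi.single_apply]
    try simp (config := { decide := true }) only [if_true, if_false, reduceIte]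
    try norm_num
    try ring
end
end

section
/- With X0 as above and X4 = ∂/∂x4 + x1 ∂/∂x6 + x2 ∂/∂x7, X5 = ∂/∂x5 + x1 ∂/∂x7 + x2 ∂/∂x8, one has [X0, X4] = X5 and [X0, X5] = -X4. -/
open scoped BigOperators

noncomputable section

def X4 : VF := fun p => ![0, 0, 0, 1, 0, p 0, p 1, 0]
def X5 : VF := fun p => ![0, 0, 0, 0, 1, 0, p 0, p 1]

abbrev E := Fin 8 → ℝ

lemma v0 (a b c d e f g h : ℝ) : (![a,b,c,d,e,f,g,h] : E) 0 = a := rfl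
lemma v1 (a b c d e f g h : ℝ) : (![a,b,c,d,e,f,g,h] : E) 1 = b := rfl
lemma v2 (a b c d e f g h : ℝ) : (![a,b,c,d,e,f,g,h] : E) 2 = c := rfl
lemma v3 (a b c d e f g h : ℝ) : (![a,b,c,d,e,f,g,h] : E) 3 = d := rfl
lemma v4 (a b c d e f g h : ℝ) : (![a,b,c,d,e,f,g,h] : E) 4 = e := rfl
lemma v5 (a b c d e f g h : ℝ) : (![a,b,c,d,e,f,g,h] : E) 5 = f := rfl
lemma v6 (a b c d e f g h : ℝ) : (![a,b,c,d,e,f,g,h] : E) 6 = g := rfl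
lemma v7 (a b c d e f g h : ℝ) : (![a,b,c,d,e,f,g,h] : E) 7 = h := rfl

lemma vm0 (a b c d e f g h : ℝ) (hk : 0 < 8) : (![a,b,c,d,e,f,g,h] : E) ⟨0, hk⟩ = a := rfl
lemma vm1 (a b c d e f g h : ℝ) (hk : 1 < 8) : (![a,b,c,d,e,f,g,h] : E) ⟨1, hk⟩ = b := rfl
lemma vm2 (a b c d e f g h : ℝ) (hk : 2 < 8) : (![a,b,c,d,e,f,g,h] : E) ⟨2, hk⟩ = c := rfl
lemma vm3 (a b c d e f g h : ℝ) (hk : 3 < 8) : (![a,b,c,d,e,f,g,h] : E) ⟨3, hk⟩ = d := rfl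
lemma vm4 (a b c d e f g h : ℝ) (hk : 4 < 8) : (![a,b,c,d,e,f,g,h] : E) ⟨4, hk⟩ = e := rfl
lemma vm5 (a b c d e f g h : ℝ) (hk : 5 < 8) : (![a,b,c,d,e,f,g,h] : E) ⟨5, hk⟩ = f := rfl
lemma vm6 (a b c d e f g h : ℝ) (hk : 6 < 8) : (![a,b,c,d,e,f,g,h] : E) ⟨6, hk⟩ = g := rfl
lemma vm7 (a b c d e f g h : ℝ) (hk : 7 < 8) : (![a,b,c,d,e,f,g,h] : E) ⟨7, hk⟩ = h := rfl

def pr (i : Fin 8) : E →L[ℝ] ℝ := ContinuousLinearMap.proj i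

lemma hq (p : E) (i : Fin 8) : HasFDerivAt (fun q : E => q i) (pr i) p :=
  hasFDerivAt_apply (𝕜 := ℝ) i p

lemma fd1 (p : E) (i : Fin 8) (v : E) : fderiv ℝ (fun q : E => q i) p v = v i := by
  rw [(hq p i).fderiv]; simp [pr]

lemma fdneg (p : E) (i : Fin 8) (v : E) : fderiv ℝ (fun q : E => -q i) p v = -v i := by
  erw [(hq p i).neg.fderiv]; simp [pr]

lemma fdA (p v : E) : fderiv ℝ (fun q : E => -(q 0)^4/24 + (q 0)^2 * (q 1)^2 / 8 + q 6) p v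
    = (-(p 0)^3/6 + p 0 * (p 1)^2/4) * v 0 + ((p 0)^2 * p 1/4) * v 1 + v 6 := by
  rw [show (fun q : E => -(q 0)^4/24 + (q 0)^2 * (q 1)^2 / 8 + q 6)
      = (fun q : E => (-((q 0 * q 0) * (q 0 * q 0))) * (1/24)
          + ((q 0 * q 0) * (q 1 * q 1)) * (1/8) + q 6)
      from funext fun q => by ring]
  erw [((((((hq p 0).mul (hq p 0)).mul ((hq p 0).mul (hq p 0))).neg.mul_const (1/24)).add
      ((((hq p 0).mul (hq p 0)).mul ((hq p 1).mul (hq p 1))).mul_const (1/8))).add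
      (hq p 6)).fderiv]
  simp [pr]; ring

lemma fdB (p v : E) :
    fderiv ℝ (fun q : E => q 0 * (q 1)^3 / 12 + (q 0)^3 * q 1 / 12 - 2 * q 5 + 2 * q 7) p v
    = ((p 1)^3/12 + (p 0)^2 * p 1/4) * v 0 + (p 0 * (p 1)^2/4 + (p 0)^3/12) * v 1
      - 2 * v 5 + 2 * v 7 := by
  rw [show (fun q : E => q 0 * (q 1)^3 / 12 + (q 0)^3 * q 1 / 12 - 2 * q 5 + 2 * q 7)
      = (fun q : E => ((q 0 * ((q 1 * q 1) * q 1)) * (1/12)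
          + (((q 0 * q 0) * q 0) * q 1) * (1/12) - 2 * q 5) + 2 * q 7)
      from funext fun q => by ring]
  erw [((((((hq p 0).mul (((hq p 1).mul (hq p 1)).mul (hq p 1))).mul_const (1/12)).add
      (((((hq p 0).mul (hq p 0)).mul (hq p 0)).mul (hq p 1)).mul_const (1/12))).sub
      ((hq p 5).const_mul 2)).add ((hq p 7).const_mul 2)).fderiv]
  simp [pr]; ring

lemma fdC (p v : E) : fderiv ℝ (fun q : E => (q 0)^2 * (q 1)^2 / 8 - (q 1)^4/24 - q 6) p v
    = (p 0 * (p 1)^2/4) * v 0 + ((p 0)^2 * p 1/4 - (p 1)^3/6) * v 1 - v 6 := by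
  rw [show (fun q : E => (q 0)^2 * (q 1)^2 / 8 - (q 1)^4/24 - q 6)
      = (fun q : E => ((q 0 * q 0) * (q 1 * q 1)) * (1/8)
          - ((q 1 * q 1) * (q 1 * q 1)) * (1/24) - q 6)
      from funext fun q => by ring]
  erw [((((((hq p 0).mul (hq p 0)).mul ((hq p 1).mul (hq p 1))).mul_const (1/8)).sub
      ((((hq p 1).mul (hq p 1)).mul ((hq p 1).mul (hq p 1))).mul_const (1/24))).sub
      (hq p 6)).fderiv]
  simp [pr]; ring

theorem stmt11 : lieBracket X0 X4 = X5 ∧ lieBracket X0 X5 = -X4 := by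
  constructor <;> funext p i <;> fin_cases i <;>
  · simp only [lieBracket, Fin.sum_univ_eight, X0, X4, X5, Pi.neg_apply,
      v0, v1, v2, v3, v4, v5, v6, v7, vm0, vm1, vm2, vm3, vm4, vm5, vm6, vm7]
    simp [fd1, fdneg, fdA, fdB, fdC, Pi.single_apply]
    try ring
end
end
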